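/- Let X be a compact Riemannian manifold with the volume form chosen so that Δ_g is symmetric on L²(X), and let V be a C^∞ real vector field with F := (1/2)Div V ∈ C^∞(X). There is a constant C, independent of h, z, ε, γ, such that for all u ∈ H²(X), all ε > 0, h > 0, γ > 1, and all z ∈ ℂ with Im z ≥ −γh, setting f := (hP_ε − z)u with P_ε = (1/i)V + iεΔ_g, one has: Im⟨f,u⟩_{L²} = h⟨Fu,u⟩_{L²} − hε‖∇_g u‖²_{L²} − (Im z)‖u‖²_{L²}, and consequently ‖∇_g u‖_{L²} ≤ C h^{-1} ε^{-1/2} ‖f‖_{L²} + (C + √γ) ε^{-1/2} ‖u‖_{L²}. -/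

import Mathlib

/-!
Pairing `f = (hP_ε - z)u` with `u` (the paper's `⟨f,u⟩` is `inner ℂ u f`), the skew part `-iV`
of `P_ε` contributes to `Im⟨f,u⟩` only through its symmetric defect `F = ½ Div V`, the term
`iεΔ_g` contributes `-hε‖∇u‖²`, and `z` contributes `-(Im z)‖u‖²`. Bounding `⟨Fu,u⟩` and
`|Im⟨f,u⟩|` by Cauchy–Schwarz and using `Im z ≥ -γh` gives
`hε‖∇u‖² ≤ h(C_F + γ)‖u‖² + ‖u‖‖f‖`, and comparing squares yields the gradient estimate with
`C = √(C_F + 1)`.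
-/

section EnergyEstimate

variable {H G : Type*} [NormedAddCommGroup H] [InnerProductSpace ℂ H]
  [NormedAddCommGroup G] [InnerProductSpace ℂ G]

theorem im_inner_energy_identity {V Δ F : H →ₗ[ℂ] H} {grad : H →ₗ[ℂ] G} {u : H}
    (hΔ : inner ℂ u (Δ u) = ((-(‖grad u‖ ^ 2) : ℝ) : ℂ))
    (hF : (inner ℂ u (V u)).re = -(inner ℂ u (F u)).re) (ε h : ℝ) (z : ℂ) :
    (inner ℂ u ((h : ℂ) • ((-Complex.I) • V + (Complex.I * (ε : ℂ)) • Δ) u - z • u)).im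
      = h * (inner ℂ u (F u)).re - h * ε * ‖grad u‖ ^ 2 - z.im * ‖u‖ ^ 2 := by
  have hu : inner ℂ u u = ((‖u‖ ^ 2 : ℝ) : ℂ) := by
    rw [inner_self_eq_norm_sq_to_K]; norm_cast
  simp only [LinearMap.add_apply, LinearMap.smul_apply, inner_sub_right, inner_smul_right,
    inner_add_right, hΔ, hu, Complex.sub_im, Complex.add_im, Complex.mul_im, Complex.mul_re,
    Complex.ofReal_im, Complex.ofReal_re, Complex.I_re, Complex.I_im, Complex.neg_re,
    Complex.neg_im, hF]
  ring

theorem mul_sq_le_of_im_inner_eq {u v f : H} {CF γ h ε g y : ℝ} (hh : 0 ≤ h)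
    (hv : ‖v‖ ≤ CF * ‖u‖) (hy : -(γ * h) ≤ y)
    (hid : (inner ℂ u f).im = h * (inner ℂ u v).re - h * ε * g ^ 2 - y * ‖u‖ ^ 2) :
    h * ε * g ^ 2 ≤ h * (CF + γ) * ‖u‖ ^ 2 + ‖u‖ * ‖f‖ := by
  have hre : (inner ℂ u v).re ≤ CF * ‖u‖ ^ 2 :=
    calc (inner ℂ u v).re ≤ ‖u‖ * ‖v‖ := re_inner_le_norm (𝕜 := ℂ) u v
      _ ≤ ‖u‖ * (CF * ‖u‖) := mul_le_mul_of_nonneg_left hv (norm_nonneg u)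
      _ = CF * ‖u‖ ^ 2 := by ring
  have him : -(inner ℂ u f).im ≤ ‖u‖ * ‖f‖ :=
    calc -(inner ℂ u f).im ≤ ‖inner ℂ u f‖ := (neg_le_abs _).trans (Complex.abs_im_le_norm _)
      _ ≤ ‖u‖ * ‖f‖ := norm_inner_le_norm u f
  have hz : -y * ‖u‖ ^ 2 ≤ γ * h * ‖u‖ ^ 2 :=
    mul_le_mul_of_nonneg_right (by linarith) (sq_nonneg _)
  nlinarith [mul_le_mul_of_nonneg_left hre hh]

end EnergyEstimate

theorem le_div_add_div_of_mul_sq_le {g a b h ε K γ : ℝ} (hh : 0 < h) (hε : 0 < ε)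
    (hK : 0 ≤ K) (hγ : 0 ≤ γ) (ha : 0 ≤ a) (hb : 0 ≤ b)
    (hg : h * ε * g ^ 2 ≤ h * (K + γ) * a ^ 2 + a * b) :
    g ≤ √(K + 1) / (h * √ε) * b + (√(K + 1) + √γ) / √ε * a := by
  set c := √(K + 1)
  set t := √γ
  have hc : c ^ 2 = K + 1 := Real.sq_sqrt (by linarith)
  have ht : t ^ 2 = γ := Real.sq_sqrt hγ
  have hc1 : 1 ≤ c := Real.one_le_sqrt.2 (by linarith)
  have ht0 : 0 ≤ t := Real.sqrt_nonneg γ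
  have hrhs : c / (h * √ε) * b + (c + t) / √ε * a = (c * b + h * (c + t) * a) / (h * √ε) := by
    field_simp
  rw [hrhs, le_div_iff₀ (by positivity)]
  have hsq : (g * (h * √ε)) ^ 2 ≤ (c * b + h * (c + t) * a) ^ 2 := by
    have hlhs : (g * (h * √ε)) ^ 2 = h * (h * ε * g ^ 2) := by
      rw [mul_pow, mul_pow, Real.sq_sqrt hε.le]; ring
    have hcross : h * a * b ≤ h * a * b * (2 * c * (c + t)) :=
      le_mul_of_one_le_right (by positivity) (by nlinarith)
    have hquad : h ^ 2 * a ^ 2 * (K + γ) ≤ h ^ 2 * a ^ 2 * (c + t) ^ 2 :=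
      mul_le_mul_of_nonneg_left (by nlinarith) (by positivity)
    nlinarith [mul_le_mul_of_nonneg_left hg hh.le, sq_nonneg (c * b)]
  exact le_of_abs_le (abs_le_of_sq_le_sq hsq (by positivity))

theorem imaginary_part_energy_estimate_general
    (H G : Type*) [NormedAddCommGroup H] [InnerProductSpace ℂ H]
    [NormedAddCommGroup G] [InnerProductSpace ℂ G]
    (Dom : Submodule ℂ H)
    (V Δ : H →ₗ[ℂ] H) (grad : H →ₗ[ℂ] G)
    (P : ℝ → H →ₗ[ℂ] H)
    (hP : ∀ ε : ℝ, P ε = (-Complex.I) • V + (Complex.I * (ε : ℂ)) • Δ)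
    -- `Δ_g ≤ 0` is symmetric, with `⟨-Δu, u⟩ = ‖∇u‖²`
    (hΔ : ∀ u ∈ Dom, (inner ℂ u (Δ u) : ℂ) = ((-(‖grad u‖^2) : ℝ) : ℂ))
    -- `F = ½ Div V`: `Re⟨Vu,u⟩ = -⟨Fu,u⟩`, `⟨Fu,u⟩` real, `F` bounded on `L²`
    (F : H →ₗ[ℂ] H) (CF : ℝ) (hCF : 0 < CF)
    (hF_re : ∀ u ∈ Dom, (inner ℂ u (V u) : ℂ).re = -(inner ℂ u (F u) : ℂ).re)
    (hF_bd : ∀ u, ‖F u‖ ≤ CF * ‖u‖) :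
    ∃ C > (0:ℝ), ∀ u ∈ Dom, ∀ ε : ℝ, 0 < ε → ∀ h : ℝ, 0 < h → ∀ γ : ℝ, 1 < γ →
      ∀ z : ℂ, -(γ * h) ≤ z.im →
        -- the identity `Im⟨f,u⟩ = h⟨Fu,u⟩ - hε‖∇_g u‖² - (Im z)‖u‖²` …
        ((inner ℂ u ((h:ℂ) • P ε u - z • u) : ℂ).im
            = h * (inner ℂ u (F u) : ℂ).re - h * ε * ‖grad u‖^2 - z.im * ‖u‖^2) ∧
        -- … and the resulting gradient estimate
        -- `‖∇_g u‖ ≤ C h⁻¹ ε^{-1/2} ‖f‖ + (C + √γ) ε^{-1/2} ‖u‖`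
        ‖grad u‖ ≤ C / (h * Real.sqrt ε) * ‖(h:ℂ) • P ε u - z • u‖
          + (C + Real.sqrt γ) / Real.sqrt ε * ‖u‖ := by
  refine ⟨√(CF + 1), Real.sqrt_pos.2 (by linarith), fun u hu ε hε h hh γ hγ z hz => ?_⟩
  rw [hP]
  have hid := im_inner_energy_identity (hΔ u hu) (hF_re u hu) ε h z
  exact ⟨hid, le_div_add_div_of_mul_sq_le hh hε hCF.le (by linarith) (norm_nonneg _)
    (norm_nonneg _) (mul_sq_le_of_im_inner_eq hh.le (hF_bd u) hz hid)⟩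

theorem imaginary_part_energy_estimate
    (H G : Type*) [NormedAddCommGroup H] [InnerProductSpace ℂ H] [CompleteSpace H]
    [NormedAddCommGroup G] [InnerProductSpace ℂ G]
    (Dom : Submodule ℂ H)
    (V Δ : H →ₗ[ℂ] H) (grad : H →ₗ[ℂ] G)
    (P : ℝ → H →ₗ[ℂ] H)
    (hP : ∀ ε : ℝ, P ε = (-Complex.I) • V + (Complex.I * (ε : ℂ)) • Δ)
    -- `Δ_g ≤ 0` is symmetric, with `⟨-Δu, u⟩ = ‖∇u‖²`
    (hΔ : ∀ u ∈ Dom, (inner ℂ u (Δ u) : ℂ) = ((-(‖grad u‖^2) : ℝ) : ℂ))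
    -- `F = ½ Div V`: `Re⟨Vu,u⟩ = -⟨Fu,u⟩`, `⟨Fu,u⟩` real, `F` bounded on `L²`
    (F : H →ₗ[ℂ] H) (CF : ℝ) (hCF : 0 < CF)
    (hF_re : ∀ u ∈ Dom, (inner ℂ u (V u) : ℂ).re = -(inner ℂ u (F u) : ℂ).re)
    (hF_real : ∀ u ∈ Dom, (inner ℂ u (F u) : ℂ).im = 0)
    (hF_bd : ∀ u, ‖F u‖ ≤ CF * ‖u‖) :
    ∃ C > (0:ℝ), ∀ u ∈ Dom, ∀ ε : ℝ, 0 < ε → ∀ h : ℝ, 0 < h → ∀ γ : ℝ, 1 < γ →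
      ∀ z : ℂ, -(γ * h) ≤ z.im →
        -- the identity `Im⟨f,u⟩ = h⟨Fu,u⟩ - hε‖∇_g u‖² - (Im z)‖u‖²` …
        ((inner ℂ u ((h:ℂ) • P ε u - z • u) : ℂ).im
            = h * (inner ℂ u (F u) : ℂ).re - h * ε * ‖grad u‖^2 - z.im * ‖u‖^2) ∧
        -- … and the resulting gradient estimate
        -- `‖∇_g u‖ ≤ C h⁻¹ ε^{-1/2} ‖f‖ + (C + √γ) ε^{-1/2} ‖u‖`
        ‖grad u‖ ≤ C / (h * Real.sqrt ε) * ‖(h:ℂ) • P ε u - z • u‖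
          + (C + Real.sqrt γ) / Real.sqrt ε * ‖u‖ :=
  imaginary_part_energy_estimate_general H G Dom V Δ grad P hP hΔ F CF hCF hF_re hF_bd
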